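/- Every reconfiguration sequence from p_b to p_e in G_φ has length at least 2m(n+2). Moreover, in any reconfiguration sequence from p_b to p_e of length exactly 2m(n+2), every move—replacing a vertex b of the current path by a vertex c—satisfies l(c) − l(b) ∈ {0,1}, cs(c) − cs(b) ∈ {0,1} and (l(c) + cs(c)) − (l(b) + cs(b)) = 1, where l and cs denote the level and the c-state of a vertex; i.e., each move increases either the level or the c-state of the switched vertex, but not both. -/

import Mathlib

/-- Vertices of the graph `G_φ` (for a CNF formula with `n` variables and `m` clauses):
`s`, `t`, the vertices `beg_{j+1}` and `end_{j+1}` (for `j : Fin (2m)`), and the gadget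
vertices `v(i+1, vs, cs, j+1)` (for `i : Fin n`, `vs cs : Bool`, `j : Fin (2m)`).
An index `i : Fin n` encodes level `i+1`, and `j : Fin (2m)` encodes depth `j+1`. -/
inductive PVert (n m : ℕ) : Type where
  | s : PVert n m
  | t : PVert n m
  | beg (j : Fin (2 * m)) : PVert n m
  | en (j : Fin (2 * m)) : PVert n m
  | v (i : Fin n) (vs : Bool) (cs : Bool) (j : Fin (2 * m)) : PVert n m
deriving DecidableEq

/-- The depth of a vertex of `G_φ`. -/
def PVert.depth {n m : ℕ} : PVert n m → ℕ
  | PVert.s => 0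
  | PVert.t => 2 * m + 1
  | PVert.beg j => (j : ℕ) + 1
  | PVert.en j => (j : ℕ) + 1
  | PVert.v _ _ _ j => (j : ℕ) + 1

/-- The level of a vertex of `G_φ` (`beg`-vertices have level `0`, `end`-vertices have
level `n+1`, the gadget vertex `v(i,vs,cs,j)` has level `i`; junk value `0` for `s`,`t`). -/
def PVert.level {n m : ℕ} : PVert n m → ℕ
  | PVert.beg _ => 0
  | PVert.en _ => n + 1
  | PVert.v i _ _ _ => (i : ℕ) + 1
  | _ => 0

/-- The c-state of a vertex of `G_φ` (`beg`-vertices have c-state `0`, `end`-vertices have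
c-state `1`, the gadget vertex `v(i,vs,cs,j)` has c-state `cs`; junk value `0` for `s`,`t`). -/
def PVert.cstate {n m : ℕ} : PVert n m → ℕ
  | PVert.beg _ => 0
  | PVert.en _ => 1
  | PVert.v _ _ cs _ => cond cs 1 0
  | _ => 0

/-- The (directed) edges of `G_φ`.  The CNF formula `φ` is recorded by its clauses:
`(i, vs) ∈ φ jc` means that clause `C_{jc+1}` contains the literal asserting `x_{i+1} = vs`,
i.e. that setting `x_{i+1} = vs` satisfies clause `C_{jc+1}`. -/
def PEdge (n m : ℕ) (φ : Fin m → Finset (Fin n × Bool)) (a b : PVert n m) : Prop :=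
  -- (a) gadget edges, same c-state: from depth j to depth j+1 inside a gadget
  (∃ (i : Fin n) (vs cs : Bool) (j j' : Fin (2 * m)), (j' : ℕ) = (j : ℕ) + 1 ∧
      a = PVert.v i vs cs j ∧ b = PVert.v i vs cs j') ∨
  -- (a) gadget edges, crossing: from even depth 2j to odd depth 2j+1, flipping the c-state
  (∃ (i : Fin n) (vs cs : Bool) (j j' : Fin (2 * m)), (j' : ℕ) = (j : ℕ) + 1 ∧
      (j : ℕ) % 2 = 1 ∧ a = PVert.v i vs cs j ∧ b = PVert.v i vs (!cs) j') ∨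
  -- (b) formula edges: from v(i,vs,1,2jc-1) to v(i,vs,0,2jc) when x_i = vs satisfies C_jc
  (∃ (i : Fin n) (vs : Bool) (j j' : Fin (2 * m)) (jc : Fin m), (j' : ℕ) = (j : ℕ) + 1 ∧
      (j : ℕ) = 2 * (jc : ℕ) ∧ (i, vs) ∈ φ jc ∧
      a = PVert.v i vs true j ∧ b = PVert.v i vs false j') ∨
  -- (c) inter-level edges, same c-state: from level i+1, depth j-1 to level i, depth j
  (∃ (ihi ilo : Fin n) (vs' vs cs : Bool) (j j' : Fin (2 * m)), (ihi : ℕ) = (ilo : ℕ) + 1 ∧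
      (j' : ℕ) = (j : ℕ) + 1 ∧ a = PVert.v ihi vs' cs j ∧ b = PVert.v ilo vs cs j') ∨
  -- (c) inter-level edges, crossing: from level i+1, even depth 2j to level i, depth 2j+1
  (∃ (ihi ilo : Fin n) (vs' vs cs : Bool) (j j' : Fin (2 * m)), (ihi : ℕ) = (ilo : ℕ) + 1 ∧
      (j' : ℕ) = (j : ℕ) + 1 ∧ (j : ℕ) % 2 = 1 ∧
      a = PVert.v ihi vs' cs j ∧ b = PVert.v ilo vs (!cs) j') ∨
  -- (d) the begin path
  (∃ (j j' : Fin (2 * m)), (j' : ℕ) = (j : ℕ) + 1 ∧ a = PVert.beg j ∧ b = PVert.beg j') ∨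
  -- (d) the end path
  (∃ (j j' : Fin (2 * m)), (j' : ℕ) = (j : ℕ) + 1 ∧ a = PVert.en j ∧ b = PVert.en j') ∨
  -- (d) from v(1,vs,0,j) to beg_{j+1}
  (∃ (i : Fin n) (vs : Bool) (j j' : Fin (2 * m)), (i : ℕ) = 0 ∧ (j' : ℕ) = (j : ℕ) + 1 ∧
      a = PVert.v i vs false j ∧ b = PVert.beg j') ∨
  -- (d) from end_j to v(n,vs,1,j+1)
  (∃ (i : Fin n) (vs : Bool) (j j' : Fin (2 * m)), (i : ℕ) + 1 = n ∧ (j' : ℕ) = (j : ℕ) + 1 ∧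
      a = PVert.en j ∧ b = PVert.v i vs true j') ∨
  -- edges from s to every vertex of depth 1
  (a = PVert.s ∧ b.depth = 1) ∨
  -- edges from every vertex of depth 2m to t
  (a.depth = 2 * m ∧ b = PVert.t)

/-- A shortest `(s,t)`-path in `G_φ`: a directed path from `s` to `t` with `2m+2` vertices,
one vertex of each depth `0, 1, …, 2m+1`. -/
def IsStPath (n m : ℕ) (φ : Fin m → Finset (Fin n × Bool))
    (p : Fin (2 * m + 1 + 1) → PVert n m) : Prop :=
  p 0 = PVert.s ∧ p (Fin.last (2 * m + 1)) = PVert.t ∧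
    (∀ i : Fin (2 * m + 1), PEdge n m φ (p i.castSucc) (p i.succ)) ∧
    (∀ d : Fin (2 * m + 1 + 1), (p d).depth = (d : ℕ))

/-- Two vertex sequences differ in exactly one position. -/
def DiffOne {N : ℕ} {α : Type*} (p q : Fin N → α) : Prop :=
  ∃ i, p i ≠ q i ∧ ∀ j, j ≠ i → p j = q j

/-- `ρ 0, ρ 1, …, ρ ℓ` is a reconfiguration sequence of length `ℓ` from the shortest
`(s,t)`-path `p` to the shortest `(s,t)`-path `q` in `G_φ`. -/
def PReconfSeq (n m : ℕ) (φ : Fin m → Finset (Fin n × Bool))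
    (ρ : ℕ → (Fin (2 * m + 1 + 1) → PVert n m)) (ℓ : ℕ)
    (p q : Fin (2 * m + 1 + 1) → PVert n m) : Prop :=
  ρ 0 = p ∧ ρ ℓ = q ∧ (∀ i ≤ ℓ, IsStPath n m φ (ρ i)) ∧
    ∀ i < ℓ, DiffOne (ρ i) (ρ (i + 1))

/-- The path `p_b = (s, beg_1, …, beg_{2m}, t)`. -/
def pbP (n m : ℕ) : Fin (2 * m + 1 + 1) → PVert n m := fun d =>
  if h0 : (d : ℕ) = 0 then PVert.s
  else if h1 : (d : ℕ) ≤ 2 * m then PVert.beg ⟨(d : ℕ) - 1, by omega⟩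
  else PVert.t

/-- The path `p_e = (s, end_1, …, end_{2m}, t)`. -/
def peP (n m : ℕ) : Fin (2 * m + 1 + 1) → PVert n m := fun d =>
  if h0 : (d : ℕ) = 0 then PVert.s
  else if h1 : (d : ℕ) ≤ 2 * m then PVert.en ⟨(d : ℕ) - 1, by omega⟩
  else PVert.t


/-!
Give every vertex the weight `level + c-state` and a path the sum of the weights of its
vertices: `p_b` has weight `0` and `p_e` has weight `2m(n+2)`. A move at even depth keeps the
predecessor, whose depth is odd; a move at odd depth keeps the successor, whose depth is even.
Edges leaving odd depth never raise the c-state and lower it only within a level, while levels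
drop by at most one along edges; so a move raises the level by at most one and cannot raise level
and c-state together, i.e. it raises the weight by at most one. Hence at least `2m(n+2)` moves
are needed, and in a sequence of exactly that length every move raises the weight by exactly one.
-/

lemma le_add_of_forall_le_succ {w : ℕ → ℕ} {ℓ : ℕ} (h : ∀ i < ℓ, w (i + 1) ≤ w i + 1)
    {i k : ℕ} (hk : i + k ≤ ℓ) : w (i + k) ≤ w i + k := by
  induction k with
  | zero => simp
  | succ k ih =>
    have := h (i + k) (by omega)
    have := ih (by omega)
    rw [← add_assoc]; omega

lemma succ_eq_of_forall_le_succ {w : ℕ → ℕ} {ℓ : ℕ} (h : ∀ i < ℓ, w (i + 1) ≤ w i + 1)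
    (htight : w ℓ = w 0 + ℓ) {i : ℕ} (hi : i < ℓ) : w (i + 1) = w i + 1 := by
  have hbefore := le_add_of_forall_le_succ h (i := 0) (k := i) (by omega)
  have hafter := le_add_of_forall_le_succ h (i := i + 1) (k := ℓ - (i + 1)) (by omega)
  rw [Nat.add_sub_cancel' hi, htight] at hafter
  rw [zero_add] at hbefore
  have := h i hi
  omega

lemma DiffOne.eq_of_ne {N : ℕ} {α : Type*} {p q : Fin N → α} (h : DiffOne p q) {i : Fin N}
    (hi : p i ≠ q i) : ∀ j, j ≠ i → p j = q j := by
  obtain ⟨k, -, hk⟩ := h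
  obtain rfl : i = k := by by_contra hik; exact hi (hk i hik)
  exact hk

variable {n m : ℕ} {φ : Fin m → Finset (Fin n × Bool)} {a b c e : PVert n m}

namespace PVert

def weight (v : PVert n m) : ℕ := v.level + v.cstate

lemma cstate_le_one (v : PVert n m) : v.cstate ≤ 1 := by
  rcases v with _ | _ | _ | _ | ⟨_, _, _ | _, _⟩ <;> simp [cstate]

end PVert

namespace PEdge

lemma depth_eq (h : PEdge n m φ a b) : b.depth = a.depth + 1 := by
  unfold PEdge at h
  rcases h with ⟨_, _, _, _, _, h, rfl, rfl⟩ | ⟨_, _, _, _, _, h, -, rfl, rfl⟩ |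
    ⟨_, _, _, _, _, h, -, -, rfl, rfl⟩ | ⟨_, _, _, _, _, _, _, -, h, rfl, rfl⟩ |
    ⟨_, _, _, _, _, _, _, -, h, -, rfl, rfl⟩ | ⟨_, _, h, rfl, rfl⟩ | ⟨_, _, h, rfl, rfl⟩ |
    ⟨_, _, _, _, -, h, rfl, rfl⟩ | ⟨_, _, _, _, -, h, rfl, rfl⟩ | ⟨rfl, h⟩ | ⟨h, rfl⟩ <;>
    simp only [PVert.depth] at h ⊢ <;> omega

lemma level_le (h : PEdge n m φ a b) (ha : a ≠ .s) : b.level ≤ a.level := by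
  unfold PEdge at h
  rcases h with ⟨_, _, _, _, _, -, rfl, rfl⟩ | ⟨_, _, _, _, _, -, -, rfl, rfl⟩ |
    ⟨_, _, _, _, _, -, -, -, rfl, rfl⟩ | ⟨_, _, _, _, _, _, _, h, -, rfl, rfl⟩ |
    ⟨_, _, _, _, _, _, _, h, -, -, rfl, rfl⟩ | ⟨_, _, -, rfl, rfl⟩ | ⟨_, _, -, rfl, rfl⟩ |
    ⟨_, _, _, _, -, -, rfl, rfl⟩ | ⟨_, _, _, _, -, -, rfl, rfl⟩ | ⟨rfl, -⟩ | ⟨-, rfl⟩ <;>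
    simp_all [PVert.level]

lemma level_le_succ (h : PEdge n m φ a b) (hb : b ≠ .t) : a.level ≤ b.level + 1 := by
  unfold PEdge at h
  rcases h with ⟨_, _, _, _, _, -, rfl, rfl⟩ | ⟨_, _, _, _, _, -, -, rfl, rfl⟩ |
    ⟨_, _, _, _, _, -, -, -, rfl, rfl⟩ | ⟨_, _, _, _, _, _, _, h, -, rfl, rfl⟩ |
    ⟨_, _, _, _, _, _, _, h, -, -, rfl, rfl⟩ | ⟨_, _, -, rfl, rfl⟩ | ⟨_, _, -, rfl, rfl⟩ |
    ⟨_, _, _, _, h, -, rfl, rfl⟩ | ⟨_, _, _, _, h, -, rfl, rfl⟩ | ⟨rfl, -⟩ | ⟨-, rfl⟩ <;>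
    simp_all [PVert.level]

lemma cstate_le_of_odd (h : PEdge n m φ a b) (ha : a.depth % 2 = 1) :
    b.cstate ≤ a.cstate ∧ (b.cstate < a.cstate → b.level = a.level) := by
  unfold PEdge at h
  rcases h with ⟨_, _, _, _, _, -, rfl, rfl⟩ | ⟨_, _, _, _, _, -, h, rfl, rfl⟩ |
    ⟨_, _, _, _, _, -, -, -, rfl, rfl⟩ | ⟨_, _, _, _, _, _, _, -, -, rfl, rfl⟩ |
    ⟨_, _, _, _, _, _, _, -, -, h, rfl, rfl⟩ | ⟨_, _, -, rfl, rfl⟩ | ⟨_, _, -, rfl, rfl⟩ |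
    ⟨_, _, _, _, -, -, rfl, rfl⟩ | ⟨_, _, _, _, -, -, rfl, rfl⟩ | ⟨rfl, -⟩ | ⟨h, rfl⟩ <;>
    simp_all [PVert.depth, PVert.level, PVert.cstate] <;> omega

lemma weight_le_of_common_pred (hab : PEdge n m φ a b) (hac : PEdge n m φ a c)
    (ha : a.depth % 2 = 1) : c.level ≤ b.level + 1 ∧ c.weight ≤ b.weight + 1 := by
  have has : a ≠ .s := by rintro rfl; simp [PVert.depth] at ha
  have hbt : b ≠ .t := by
    rintro rfl; have : 2 * m + 1 = a.depth + 1 := hab.depth_eq; omega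
  have := hac.level_le has
  have := hab.level_le has
  have := hab.level_le_succ hbt
  have := hab.cstate_le_of_odd ha
  have := hac.cstate_le_of_odd ha
  have := a.cstate_le_one
  unfold PVert.weight; omega

lemma weight_le_of_common_succ (hbe : PEdge n m φ b e) (hce : PEdge n m φ c e)
    (hb : b.depth % 2 = 1) : c.level ≤ b.level + 1 ∧ c.weight ≤ b.weight + 1 := by
  have hc : c.depth % 2 = 1 := by have := hbe.depth_eq; have := hce.depth_eq; omega
  have hbs : b ≠ .s := by rintro rfl; simp [PVert.depth] at hb
  have het : e ≠ .t := by
    rintro rfl; have : 2 * m + 1 = b.depth + 1 := hbe.depth_eq; omega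
  have := hce.level_le_succ het
  have := hbe.level_le hbs
  have := hbe.cstate_le_of_odd hb
  have := hce.cstate_le_of_odd hc
  have := c.cstate_le_one
  unfold PVert.weight; omega

end PEdge

def pathWeight {N : ℕ} (p : Fin N → PVert n m) : ℕ := ∑ d, (p d).weight

lemma pathWeight_add_weight_eq {N : ℕ} {p q : Fin N → PVert n m} {pos : Fin N}
    (hpq : ∀ j, j ≠ pos → p j = q j) :
    pathWeight q + (p pos).weight = pathWeight p + (q pos).weight := by
  have hrest : ∑ d ∈ Finset.univ.erase pos, (p d).weight
      = ∑ d ∈ Finset.univ.erase pos, (q d).weight :=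
    Finset.sum_congr rfl fun d hd => by rw [hpq d (Finset.ne_of_mem_erase hd)]
  simp only [pathWeight, ← Finset.add_sum_erase _ _ (Finset.mem_univ pos), hrest]
  ring

lemma pathWeight_pbP : pathWeight (pbP n m) = 0 :=
  Finset.sum_eq_zero fun d _ => by unfold pbP; split_ifs <;> rfl

lemma pathWeight_peP : pathWeight (peP n m) = 2 * m * (n + 2) := by
  have hmid : ∀ d : Fin (2 * m), (peP n m d.castSucc.succ).weight = n + 2 := fun d => by
    simp [peP, PVert.weight, PVert.level, PVert.cstate]
  have hfirst : (peP n m 0).weight = 0 := rfl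
  have hlast : (peP n m (Fin.last (2 * m)).succ).weight = 0 := by
    simp [peP, PVert.weight, PVert.level, PVert.cstate]
  rw [pathWeight, Fin.sum_univ_succ, Fin.sum_univ_castSucc]
  simp only [hfirst, hmid, hlast, Finset.sum_const, Finset.card_univ, Fintype.card_fin,
    smul_eq_mul, zero_add, add_zero]

namespace IsStPath

variable {p q : Fin (2 * m + 1 + 1) → PVert n m}

lemma edge (hp : IsStPath n m φ p) {k : ℕ} (hk : k + 1 < 2 * m + 1 + 1) :
    PEdge n m φ (p ⟨k, by omega⟩) (p ⟨k + 1, hk⟩) :=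
  hp.2.2.1 ⟨k, by omega⟩

lemma move_le (hp : IsStPath n m φ p) (hq : IsStPath n m φ q) {pos : Fin (2 * m + 1 + 1)}
    (hne : p pos ≠ q pos) (hpq : ∀ j, j ≠ pos → p j = q j) :
    (q pos).level ≤ (p pos).level + 1 ∧ (q pos).weight ≤ (p pos).weight + 1 := by
  obtain ⟨_ | k, hd⟩ := pos
  · exact absurd (hp.1.trans hq.1.symm) hne
  have hdepth : ∀ j, (p j).depth = j := hp.2.2.2
  rcases Nat.even_or_odd k with hk | hk
  · have hk2 : k + 1 + 1 < 2 * m + 1 + 1 := by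
      refine lt_of_le_of_ne hd fun hlast => hne ?_
      rw [show (⟨k + 1, hd⟩ : Fin _) = Fin.last _ from Fin.ext (by simp; omega), hp.2.1, hq.2.1]
    have hce := hq.edge hk2
    rw [← hpq ⟨k + 1 + 1, hk2⟩ (Fin.ne_of_val_ne (by simp))] at hce
    exact PEdge.weight_le_of_common_succ (hp.edge hk2) hce (by rw [hdepth]; grind)
  · have hac := hq.edge hd
    rw [← hpq ⟨k, by omega⟩ (Fin.ne_of_val_ne (by simp))] at hac
    exact PEdge.weight_le_of_common_pred (hp.edge hd) hac (by rw [hdepth]; grind)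

lemma pathWeight_le_succ (hp : IsStPath n m φ p) (hq : IsStPath n m φ q) (h : DiffOne p q) :
    pathWeight q ≤ pathWeight p + 1 := by
  obtain ⟨pos, hne, hpq⟩ := h
  have := pathWeight_add_weight_eq hpq
  have := (hp.move_le hq hne hpq).2
  omega

end IsStPath

theorem stmt3_general (n m : ℕ) (φ : Fin m → Finset (Fin n × Bool))
    (ℓ : ℕ) (ρ : ℕ → (Fin (2 * m + 1 + 1) → PVert n m))
    (hρ : PReconfSeq n m φ ρ ℓ (pbP n m) (peP n m)) :
    2 * m * (n + 2) ≤ ℓ ∧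
    (ℓ = 2 * m * (n + 2) →
      ∀ i < ℓ, ∀ pos : Fin (2 * m + 1 + 1), ρ i pos ≠ ρ (i + 1) pos →
        ((ρ (i + 1) pos).level = (ρ i pos).level ∨
            (ρ (i + 1) pos).level = (ρ i pos).level + 1) ∧
        ((ρ (i + 1) pos).cstate = (ρ i pos).cstate ∨
            (ρ (i + 1) pos).cstate = (ρ i pos).cstate + 1) ∧
        (ρ (i + 1) pos).level + (ρ (i + 1) pos).cstate =
          (ρ i pos).level + (ρ i pos).cstate + 1) := by
  obtain ⟨h0, hℓ, hpath, hmove⟩ := hρ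
  set w : ℕ → ℕ := fun i => pathWeight (ρ i)
  have hstep : ∀ i < ℓ, w (i + 1) ≤ w i + 1 := fun i hi =>
    (hpath i hi.le).pathWeight_le_succ (hpath (i + 1) hi) (hmove i hi)
  have hends : w ℓ = w 0 + 2 * m * (n + 2) := by
    simp only [w, h0, hℓ, pathWeight_pbP, pathWeight_peP, zero_add]
  refine ⟨?_, ?_⟩
  · have := le_add_of_forall_le_succ hstep (i := 0) (k := ℓ) (by omega)
    rw [zero_add] at this
    omega
  · rintro rfl i hi pos hne
    have hpq := (hmove i hi).eq_of_ne hne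
    have hweight := pathWeight_add_weight_eq hpq
    have hsucc : pathWeight (ρ (i + 1)) = pathWeight (ρ i) + 1 :=
      succ_eq_of_forall_le_succ hstep hends hi
    have hlevel := ((hpath i hi.le).move_le (hpath (i + 1) hi) hne hpq).1
    have := (ρ i pos).cstate_le_one
    have := (ρ (i + 1) pos).cstate_le_one
    unfold PVert.weight at hweight
    omega

/-- every reconfiguration sequence from `p_b` to `p_e` in `G_φ` has length at
least `2m(n+2)`; moreover, in any such sequence of length exactly `2m(n+2)`, every move
(replacing a vertex `b` of the current path by a vertex `c`) increases either the level or
the c-state of the switched vertex by one, but not both. -/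
theorem stmt3 (n m : ℕ) (hn : 1 ≤ n) (hm : 1 ≤ m) (φ : Fin m → Finset (Fin n × Bool))
    (ℓ : ℕ) (ρ : ℕ → (Fin (2 * m + 1 + 1) → PVert n m))
    (hρ : PReconfSeq n m φ ρ ℓ (pbP n m) (peP n m)) :
    2 * m * (n + 2) ≤ ℓ ∧
    (ℓ = 2 * m * (n + 2) →
      ∀ i < ℓ, ∀ pos : Fin (2 * m + 1 + 1), ρ i pos ≠ ρ (i + 1) pos →
        ((ρ (i + 1) pos).level = (ρ i pos).level ∨
            (ρ (i + 1) pos).level = (ρ i pos).level + 1) ∧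
        ((ρ (i + 1) pos).cstate = (ρ i pos).cstate ∨
            (ρ (i + 1) pos).cstate = (ρ i pos).cstate + 1) ∧
        (ρ (i + 1) pos).level + (ρ (i + 1) pos).cstate =
          (ρ i pos).level + (ρ i pos).cstate + 1) :=
  stmt3_general n m φ ℓ ρ hρ
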